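/- For any (α,β) ∈ ℝ² with 0 ≤ β ≤ α, the image F(α,β) = (α',β') satisfies α' + β' ≤ α + β, i.e., the coordinate sum is non-increasing under F on the region {0 ≤ β ≤ α}. -/
import Mathlib


noncomputable def Fop : ℝ × ℝ → ℝ × ℝ := fun p =>
  ((6*p.2 + 3*p.1 + 4*p.1*p.2)/(6 + 3*p.1),
   (3*p.1 + 4*p.1*p.2)/(6 + 6*p.2 + 3*p.1 + 4*p.1*p.2))

def Dset : Set (ℝ × ℝ) := {p | 0 ≤ p.1 ∧ p.1 ≤ 4 ∧ 0 ≤ p.2 ∧ p.2 ≤ 1}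

theorem stmt10 : ∀ p : ℝ × ℝ, 0 ≤ p.2 → p.2 ≤ p.1 →
    (Fop p).1 + (Fop p).2 ≤ p.1 + p.2 := by
  rintro ⟨a, b⟩ hb hba
  have ha : (0:ℝ) ≤ a := le_trans hb hba
  simp only [Fop]
  have h1 : (0:ℝ) < 6 + 3*a := by linarith
  have h2 : (0:ℝ) < 6 + 6*b + 3*a + 4*a*b := by nlinarith
  rw [div_add_div _ _ (ne_of_gt h1) (ne_of_gt h2), div_le_iff₀ (by positivity)]
  nlinarith [sq_nonneg (a-b), sq_nonneg (a*b), mul_nonneg ha hb, mul_nonneg (mul_nonneg ha hb) hb, mul_nonneg (mul_nonneg ha ha) hb, sq_nonneg (a*b - b), mul_nonneg (mul_nonneg ha hb) (sub_nonneg.2 hba)]
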